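/- arXiv:2101.08873 — 7 statements merged into one kernel-verified Lean document; each statement's English description precedes it below -/
import Mathlib

section
/- Let V : S → X → X̂ → [0,∞) be a simulation function from the abstract system (X̂,Û,S,f̂,ĥ) to the concrete system (X,U,S,f,h) with parameters α > 0, b > 0, λ ∈ (0,1) and ρ_ext of class 𝒦. Then for every switching signal σ : ℕ → S, every x₀ ∈ X, x̂₀ ∈ X̂, and every abstract input sequence û : ℕ → Û with r := sup_{k∈ℕ} ‖û(k)‖_Û < ∞, there exists a concrete input sequence u : ℕ → U such that for every ε ∈ (0,λ) and every k ∈ ℕ the corresponding output trajectories satisfy ‖y(k) − ŷ(k)‖ ≤ (2/α)^{1/b} (1−ε)^{k/b} (V_{σ(0)}(x₀,x̂₀))^{1/b} + (2(1−ε)/(α(λ−ε)) · ρ_ext(r))^{1/b}. In particular, there exist ϑ > 0, β ∈ (0,1) and γ_ext of class 𝒦 (independent of σ, x₀, x̂₀, û) with ‖y(k) − ŷ(k)‖ ≤ ϑ β^k (V_{σ(0)}(x₀,x̂₀))^{1/b} + γ_ext(r) for all k. -/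
/-- A class 𝒦 comparison function: continuous and strictly increasing on `[0, ∞)`,
vanishing at `0`, and mapping `[0, ∞)` into `[0, ∞)`. -/
def ClassK (ρ : ℝ → ℝ) : Prop :=
  ContinuousOn ρ (Set.Ici 0) ∧ StrictMonoOn ρ (Set.Ici 0) ∧ ρ 0 = 0 ∧
    ∀ t, 0 ≤ t → 0 ≤ ρ t

/-- The trajectory of a switched system with transition maps `f`, switching
signal `σ`, input sequence `u`, and initial state `x₀`. -/
def traj {X U S : Type*} (f : S → X → U → X) (σ : ℕ → S) (u : ℕ → U) (x₀ : X) :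
    ℕ → X
  | 0 => x₀
  | k + 1 => f (σ k) (traj f σ u x₀ k) (u k)

lemma aux_sum_rpow (a c p : ℝ) (ha : 0 ≤ a) (hc : 0 ≤ c) (hp : 0 ≤ p) :
    (a + c) ^ p ≤ (2 * a) ^ p + (2 * c) ^ p := by
  rcases le_total a c with hle | hle
  · calc (a + c) ^ p ≤ (2 * c) ^ p :=
        Real.rpow_le_rpow (by linarith) (by linarith) hp
    _ ≤ (2 * a) ^ p + (2 * c) ^ p :=
        le_add_of_nonneg_left (Real.rpow_nonneg (by linarith) p)
  · calc (a + c) ^ p ≤ (2 * a) ^ p :=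
        Real.rpow_le_rpow (by linarith) (by linarith) hp
    _ ≤ (2 * a) ^ p + (2 * c) ^ p :=
        le_add_of_nonneg_right (Real.rpow_nonneg (by linarith) p)


/-- Proposition 1: if `V` is a simulation function from the abstract switched
system `(Xh, Uh, S, fh, hA)` to the concrete switched system `(X, U, S, f, h)` with
parameters `α > 0`, `b > 0`, `λ ∈ (0,1)`, `ρ_ext ∈ 𝒦`, then for every switching
signal, initial states and bounded abstract input sequence there is a concrete
input sequence realizing the explicit output-mismatch bound; in particular there
exist `ϑ > 0`, `β ∈ (0,1)`, `γ_ext ∈ 𝒦` realizing the bound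
`‖y k - yh k‖ ≤ ϑ β^k (V_{σ 0}(x₀, xh₀))^{1/b} + γ_ext r`. -/


theorem simulation_function_output_bound
    {X U Xh Uh S Y : Type*} [NormedAddCommGroup Y] [Nonempty S]
    (f : S → X → U → X) (h : S → X → Y)
    (fh : S → Xh → Uh → Xh) (hA : S → Xh → Y)
    (normUh : Uh → ℝ) (hnormUh : ∀ uh, 0 ≤ normUh uh)
    (V : S → X → Xh → ℝ) (hVnonneg : ∀ s x xh, 0 ≤ V s x xh)
    (α b lam : ℝ) (ρ_ext : ℝ → ℝ)
    (hα : 0 < α) (hb : 0 < b) (hlam0 : 0 < lam) (hlam1 : lam < 1)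
    (hρ : ClassK ρ_ext)
    (hlow : ∀ s x xh, α * ‖h s x - hA s xh‖ ^ b ≤ V s x xh)
    (hdec : ∀ s' s x xh uh, ∃ u : U,
      V s' (f s x u) (fh s xh uh) - V s x xh ≤ -lam * V s x xh + ρ_ext (normUh uh)) :
    (∀ (σ : ℕ → S) (x₀ : X) (xh₀ : Xh) (uh : ℕ → Uh),
      BddAbove (Set.range fun k => normUh (uh k)) →
      ∃ u : ℕ → U, ∀ ε : ℝ, 0 < ε → ε < lam → ∀ k : ℕ,
        ‖h (σ k) (traj f σ u x₀ k) - hA (σ k) (traj fh σ uh xh₀ k)‖ ≤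
          (2 / α) ^ (1 / b) * (1 - ε) ^ ((k : ℝ) / b) * V (σ 0) x₀ xh₀ ^ (1 / b) +
            (2 * (1 - ε) / (α * (lam - ε)) *
              ρ_ext (⨆ k, normUh (uh k))) ^ (1 / b)) ∧
    (∃ (ϑ β : ℝ) (γ_ext : ℝ → ℝ), 0 < ϑ ∧ 0 < β ∧ β < 1 ∧ ClassK γ_ext ∧
      ∀ (σ : ℕ → S) (x₀ : X) (xh₀ : Xh) (uh : ℕ → Uh),
        BddAbove (Set.range fun k => normUh (uh k)) →
        ∃ u : ℕ → U, ∀ k : ℕ,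
          ‖h (σ k) (traj f σ u x₀ k) - hA (σ k) (traj fh σ uh xh₀ k)‖ ≤
            ϑ * β ^ k * V (σ 0) x₀ xh₀ ^ (1 / b) +
              γ_ext (⨆ k, normUh (uh k))) := by
  have hb' : (0:ℝ) < 1 / b := by positivity
  have main : ∀ (σ : ℕ → S) (x₀ : X) (xh₀ : Xh) (uh : ℕ → Uh),
      BddAbove (Set.range fun k => normUh (uh k)) →
      ∃ u : ℕ → U, ∀ ε : ℝ, 0 < ε → ε < lam → ∀ k : ℕ,
        ‖h (σ k) (traj f σ u x₀ k) - hA (σ k) (traj fh σ uh xh₀ k)‖ ≤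
          (2 / α) ^ (1 / b) * (1 - ε) ^ ((k : ℝ) / b) * V (σ 0) x₀ xh₀ ^ (1 / b) +
            (2 * (1 - ε) / (α * (lam - ε)) *
              ρ_ext (⨆ k, normUh (uh k))) ^ (1 / b) := by
    intro σ x₀ xh₀ uh hbdd
    set r := ⨆ k, normUh (uh k) with hrdef
    have hrk : ∀ k, normUh (uh k) ≤ r := fun k => le_ciSup hbdd k
    have hr0 : 0 ≤ r := le_trans (hnormUh (uh 0)) (hrk 0)
    have hρr0 : 0 ≤ ρ_ext r := hρ.2.2.2 r hr0
    set xh : ℕ → Xh := traj fh σ uh xh₀ with hxh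
    let sel : ℕ → X → U := fun k x =>
      Classical.choose (hdec (σ (k+1)) (σ k) x (xh k) (uh k))
    have hsel : ∀ k x,
        V (σ (k+1)) (f (σ k) x (sel k x)) (fh (σ k) (xh k) (uh k)) - V (σ k) x (xh k)
          ≤ -lam * V (σ k) x (xh k) + ρ_ext (normUh (uh k)) :=
      fun k x => Classical.choose_spec (hdec (σ (k+1)) (σ k) x (xh k) (uh k))
    let w : ℕ → X := fun k => Nat.rec x₀ (fun k xk => f (σ k) xk (sel k xk)) k
    let u : ℕ → U := fun k => sel k (w k)
    refine ⟨u, ?_⟩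
    have hw : ∀ k, traj f σ u x₀ k = w k := by
      intro k
      induction k with
      | zero => rfl
      | succ k ih =>
        show f (σ k) (traj f σ u x₀ k) (u k) = f (σ k) (w k) (sel k (w k))
        rw [ih]
    have hxhstep : ∀ k, xh (k+1) = fh (σ k) (xh k) (uh k) := fun k => rfl
    have hVstep : ∀ k, V (σ (k+1)) (w (k+1)) (xh (k+1)) ≤
        (1 - lam) * V (σ k) (w k) (xh k) + ρ_ext r := by
      intro k
      have h1 := hsel k (w k)
      have h2 : ρ_ext (normUh (uh k)) ≤ ρ_ext r :=
        hρ.2.1.monotoneOn (hnormUh (uh k)) hr0 (hrk k)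
      have hwS : w (k+1) = f (σ k) (w k) (sel k (w k)) := rfl
      rw [hwS, hxhstep k]
      linarith
    have hVbound : ∀ k, V (σ k) (w k) (xh k) ≤
        (1 - lam) ^ k * V (σ 0) x₀ xh₀ + ρ_ext r / lam := by
      intro k
      induction k with
      | zero =>
        have : V (σ 0) (w 0) (xh 0) = V (σ 0) x₀ xh₀ := rfl
        rw [this, pow_zero, one_mul]
        have : 0 ≤ ρ_ext r / lam := div_nonneg hρr0 hlam0.le
        linarith
      | succ k ih =>
        have h1m : (0:ℝ) ≤ 1 - lam := by linarith
        have key : (1 - lam) * ((1 - lam) ^ k * V (σ 0) x₀ xh₀ + ρ_ext r / lam)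
            + ρ_ext r = (1 - lam) ^ (k+1) * V (σ 0) x₀ xh₀ + ρ_ext r / lam := by
          field_simp
          ring
        have h3 := mul_le_mul_of_nonneg_left ih h1m
        have h4 := hVstep k
        linarith
    intro ε hε0 heps k
    rw [hw k]
    have hε1 : ε < 1 := lt_trans heps hlam1
    have h1ε0 : (0:ℝ) ≤ 1 - ε := by linarith
    have hlamEps : (0:ℝ) < lam - ε := by linarith
    have hV0 : 0 ≤ V (σ 0) x₀ xh₀ := hVnonneg _ _ _
    have hAk : (1 - lam) ^ k ≤ (1 - ε) ^ k :=
      pow_le_pow_left₀ (by linarith) (by linarith) k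
    have hfrac : ρ_ext r / lam ≤ (1 - ε) * ρ_ext r / (lam - ε) := by
      rw [div_le_div_iff₀ hlam0 hlamEps]
      nlinarith [mul_nonneg hρr0 (mul_nonneg hε0.le (by linarith : (0:ℝ) ≤ 1 - lam))]
    have hVk2 : V (σ k) (w k) (xh k) ≤
        (1 - ε) ^ k * V (σ 0) x₀ xh₀ + (1 - ε) * ρ_ext r / (lam - ε) := by
      have := mul_le_mul_of_nonneg_right hAk hV0
      linarith [hVbound k]
    set A : ℝ := (1 - ε) ^ k * V (σ 0) x₀ xh₀ / α with hAdef
    set B : ℝ := (1 - ε) * ρ_ext r / (α * (lam - ε)) with hBdef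
    have hA0 : 0 ≤ A := by positivity
    have hB0 : 0 ≤ B := by positivity
    set N : ℝ := ‖h (σ k) (w k) - hA (σ k) (xh k)‖ with hNdef
    have hN0 : (0:ℝ) ≤ N := norm_nonneg _
    have hNb : N ^ b ≤ A + B := by
      have hlowk := hlow (σ k) (w k) (xh k)
      have hkey : α * (A + B) = (1 - ε) ^ k * V (σ 0) x₀ xh₀
          + (1 - ε) * ρ_ext r / (lam - ε) := by
        rw [hAdef, hBdef]
        field_simp
      have h5 : α * N ^ b ≤ α * (A + B) := by
        rw [hkey]; exact le_trans hlowk hVk2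
      exact le_of_mul_le_mul_left h5 hα
    have hNle : N ≤ (A + B) ^ (1 / b) := by
      have h6 : (N ^ b) ^ (1 / b) ≤ (A + B) ^ (1 / b) :=
        Real.rpow_le_rpow (Real.rpow_nonneg hN0 b) hNb hb'.le
      have h7 : (N ^ b) ^ (1 / b) = N := by
        rw [← Real.rpow_mul hN0, mul_one_div, div_self hb.ne', Real.rpow_one]
      rwa [h7] at h6
    have hsplit : (A + B) ^ (1 / b) ≤ (2 * A) ^ (1 / b) + (2 * B) ^ (1 / b) :=
      aux_sum_rpow A B (1 / b) hA0 hB0 hb'.le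
    have hterm1 : (2 * A) ^ (1 / b) =
        (2 / α) ^ (1 / b) * (1 - ε) ^ ((k : ℝ) / b) * V (σ 0) x₀ xh₀ ^ (1 / b) := by
      have h2A : 2 * A = (2 / α) * ((1 - ε) ^ k * V (σ 0) x₀ xh₀) := by
        rw [hAdef]; field_simp
      rw [h2A, Real.mul_rpow (by positivity) (by positivity),
        Real.mul_rpow (by positivity) hV0, ← Real.rpow_natCast (1 - ε) k,
        ← Real.rpow_mul h1ε0, mul_one_div, mul_assoc]
    have hterm2 : (2 * B) ^ (1 / b) =
        (2 * (1 - ε) / (α * (lam - ε)) * ρ_ext r) ^ (1 / b) := by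
      congr 1
      rw [hBdef]; ring
    calc N ≤ (A + B) ^ (1 / b) := hNle
      _ ≤ (2 * A) ^ (1 / b) + (2 * B) ^ (1 / b) := hsplit
      _ = (2 / α) ^ (1 / b) * (1 - ε) ^ ((k : ℝ) / b) * V (σ 0) x₀ xh₀ ^ (1 / b) +
          (2 * (1 - ε) / (α * (lam - ε)) * ρ_ext r) ^ (1 / b) := by
          rw [hterm1, hterm2]
  refine ⟨main, ?_⟩
  have h12 : (0:ℝ) < 1 - lam / 2 := by linarith
  have h12' : (1:ℝ) - lam / 2 < 1 := by linarith
  have hc : (0:ℝ) < 2 * (1 - lam / 2) / (α * (lam - lam / 2)) := by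
    have : (0:ℝ) < lam - lam / 2 := by linarith
    positivity
  refine ⟨(2 / α) ^ (1 / b), (1 - lam / 2) ^ (1 / b),
    fun t => (2 * (1 - lam / 2) / (α * (lam - lam / 2)) * ρ_ext t) ^ (1 / b),
    Real.rpow_pos_of_pos (by positivity) _,
    Real.rpow_pos_of_pos h12 _,
    Real.rpow_lt_one h12.le h12' hb',
    ⟨?_, ?_, ?_, ?_⟩, ?_⟩
  · have hcont : Continuous fun x : ℝ => x ^ (1 / b) :=
      continuous_iff_continuousAt.2 fun x =>
        Real.continuousAt_rpow_const x (1 / b) (Or.inr hb'.le)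
    exact hcont.comp_continuousOn (continuousOn_const.mul hρ.1)
  · intro x hx y hy hxy
    exact Real.rpow_lt_rpow (mul_nonneg hc.le (hρ.2.2.2 x hx))
      (mul_lt_mul_of_pos_left (hρ.2.1 hx hy hxy) hc) hb'
  · show (2 * (1 - lam / 2) / (α * (lam - lam / 2)) * ρ_ext 0) ^ (1 / b) = 0
    rw [hρ.2.2.1, mul_zero, Real.zero_rpow (one_div_ne_zero hb.ne')]
  · intro t ht
    exact Real.rpow_nonneg (mul_nonneg hc.le (hρ.2.2.2 t ht)) _
  · intro σ x₀ xh₀ uh hbdd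
    obtain ⟨u, hu⟩ := main σ x₀ xh₀ uh hbdd
    refine ⟨u, fun k => ?_⟩
    have hβk : ((1 - lam / 2) ^ (1 / b) : ℝ) ^ k = (1 - lam / 2) ^ ((k : ℝ) / b) := by
      rw [← Real.rpow_natCast ((1 - lam / 2) ^ (1 / b)) k, ← Real.rpow_mul h12.le,
        one_div_mul_eq_div]
    rw [hβk]
    exact hu (lam / 2) (by linarith) (by linarith) k
end

section
/- Let V : S → X → X̂ → [0,∞) satisfy the lower bound α‖h_s(x) − ĥ_s(x̂)‖^b ≤ V_s(x,x̂) (α, b > 0), and suppose an interface map ν : X → X̂ → Û → S → U is given such that for all s′, s ∈ S, x ∈ X, x̂ ∈ X̂, û ∈ Û: V_{s′}(f_s(x, ν(x,x̂,û,s)), f̂_s(x̂,û)) − V_s(x,x̂) ≤ −λ V_s(x,x̂) + ρ_ext(‖û‖_Û), with λ ∈ (0,1) and ρ_ext of class 𝒦. Then for every switching signal σ : ℕ → S, every x₀ ∈ X, x̂₀ ∈ X̂ and every abstract input sequence û : ℕ → Û with r := sup_k ‖û(k)‖_Û < ∞, the closed-loop input u(k) := ν(x(k), x̂(k), û(k),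 σ(k)) (with x, x̂ the resulting closed-loop trajectories) realizes, for every ε ∈ (0,λ) and all k ∈ ℕ, the bound ‖y(k) − ŷ(k)‖ ≤ (2/α)^{1/b}(1−ε)^{k/b}(V_{σ(0)}(x₀,x̂₀))^{1/b} + (2(1−ε)/(α(λ−ε)) · ρ_ext(r))^{1/b}. -/
/-- The closed-loop trajectory of the concrete switched system under the
interface map `ν`: the input at time `k` is `ν (x k) (xh k) (uh k) (σ k)`,
where `xh` is the (given) abstract trajectory. -/
def clTraj {X Xh U Uh S : Type*} (f : S → X → U → X)
    (ν : X → Xh → Uh → S → U) (σ : ℕ → S) (uh : ℕ → Uh) (xh : ℕ → Xh)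
    (x₀ : X) : ℕ → X
  | 0 => x₀
  | k + 1 =>
    f (σ k) (clTraj f ν σ uh xh x₀ k)
      (ν (clTraj f ν σ uh xh x₀ k) (xh k) (uh k) (σ k))


private lemma aux_rpow_add {a c p : ℝ} (ha : 0 ≤ a) (hc : 0 ≤ c) (hp : 0 ≤ p) :
    (a + c) ^ p ≤ (2 * a) ^ p + (2 * c) ^ p := by
  rcases le_total a c with hac | hac
  · calc (a + c) ^ p ≤ (2 * c) ^ p :=
        Real.rpow_le_rpow (by linarith) (by linarith) hp
      _ ≤ (2 * a) ^ p + (2 * c) ^ p :=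
        le_add_of_nonneg_left (Real.rpow_nonneg (by linarith) p)
  · calc (a + c) ^ p ≤ (2 * a) ^ p :=
        Real.rpow_le_rpow (by linarith) (by linarith) hp
      _ ≤ (2 * a) ^ p + (2 * c) ^ p :=
        le_add_of_nonneg_right (Real.rpow_nonneg (by linarith) p)

/-- If `V` satisfies the simulation-function lower bound with parameters
`α, b > 0` and an interface map `ν` realizes the one-step decrease with
`lam ∈ (0,1)` and `ρ_ext ∈ 𝒦`, then for every switching signal, initial states
and bounded abstract input sequence (with `r = sup_k ‖uh k‖`), the closed-loop
input `u k = ν (x k) (xh k) (uh k) (σ k)` realizes, for every `ε ∈ (0, lam)`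
and all `k`, the explicit output-mismatch bound. -/
theorem interface_realizes_output_bound
    {X U Xh Uh S Y : Type*} [NormedAddCommGroup Y] [Nonempty S]
    (f : S → X → U → X) (h : S → X → Y)
    (fh : S → Xh → Uh → Xh) (hB : S → Xh → Y)
    (normUh : Uh → ℝ) (hnormUh : ∀ uh, 0 ≤ normUh uh)
    (V : S → X → Xh → ℝ) (hVnonneg : ∀ s x xh, 0 ≤ V s x xh)
    (ν : X → Xh → Uh → S → U)
    (α b lam : ℝ) (ρ_ext : ℝ → ℝ)
    (hα : 0 < α) (hb : 0 < b) (hlam0 : 0 < lam) (hlam1 : lam < 1)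
    (hρ : ClassK ρ_ext)
    (hlow : ∀ s x xh, α * ‖h s x - hB s xh‖ ^ b ≤ V s x xh)
    (hdec : ∀ s' s x xh uh,
      V s' (f s x (ν x xh uh s)) (fh s xh uh) - V s x xh ≤
        -lam * V s x xh + ρ_ext (normUh uh)) :
    ∀ (σ : ℕ → S) (x₀ : X) (xh₀ : Xh) (uh : ℕ → Uh),
      BddAbove (Set.range fun k => normUh (uh k)) →
      ∀ ε : ℝ, 0 < ε → ε < lam → ∀ k : ℕ,
        ‖h (σ k) (clTraj f ν σ uh (traj fh σ uh xh₀) x₀ k) -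
            hB (σ k) (traj fh σ uh xh₀ k)‖ ≤
          (2 / α) ^ (1 / b) * (1 - ε) ^ ((k : ℝ) / b) * V (σ 0) x₀ xh₀ ^ (1 / b) +
            (2 * (1 - ε) / (α * (lam - ε)) *
              ρ_ext (⨆ k, normUh (uh k))) ^ (1 / b) := by
  
  intro σ x₀ xh₀ uh hbdd ε hε0 hεlam k
  have hε1 : ε < 1 := lt_trans hεlam hlam1
  have h1ε : (0:ℝ) < 1 - ε := by linarith
  have hlamε : (0:ℝ) < lam - ε := by linarith
  set xh : ℕ → Xh := traj fh σ uh xh₀ with hxh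
  set x : ℕ → X := clTraj f ν σ uh xh x₀ with hx
  set r : ℝ := ⨆ k, normUh (uh k) with hr
  have hler : ∀ j, normUh (uh j) ≤ r := fun j => le_ciSup hbdd j
  have hr0 : 0 ≤ r := le_trans (hnormUh (uh 0)) (hler 0)
  set P : ℝ := ρ_ext r with hP
  have hP0 : 0 ≤ P := hρ.2.2.2 r hr0
  set B : ℝ := P * (1 - ε) / (lam - ε) with hBdef
  have hB0 : 0 ≤ B := div_nonneg (mul_nonneg hP0 h1ε.le) hlamε.le
  set W : ℕ → ℝ := fun j => V (σ j) (x j) (xh j) with hWdef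
  have hW0 : ∀ j, 0 ≤ W j := fun j => hVnonneg _ _ _
  have step : ∀ j, W (j + 1) ≤ (1 - lam) * W j + P := by
    intro j
    have h1 := hdec (σ (j + 1)) (σ j) (x j) (xh j) (uh j)
    have h2 : ρ_ext (normUh (uh j)) ≤ P :=
      hρ.2.1.monotoneOn (hnormUh (uh j)) hr0 (hler j)
    have hx1 : x (j + 1) = f (σ j) (x j) (ν (x j) (xh j) (uh j) (σ j)) := rfl
    have hxh1 : xh (j + 1) = fh (σ j) (xh j) (uh j) := rfl
    have h3 : W (j + 1) - W j ≤ -lam * W j + ρ_ext (normUh (uh j)) := by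
      simpa [hWdef, hx1, hxh1] using h1
    linarith
  have key : ∀ j, W j ≤ (1 - ε) ^ j * W 0 + B := by
    intro j
    induction j with
    | zero => simp only [pow_zero, one_mul]; linarith
    | succ n ih =>
      have h1 : (1 - lam) * W n ≤ (1 - lam) * ((1 - ε) ^ n * W 0 + B) :=
        mul_le_mul_of_nonneg_left ih (by linarith)
      have h2 : (1 - lam) * ((1 - ε) ^ n * W 0) ≤ (1 - ε) * ((1 - ε) ^ n * W 0) :=
        mul_le_mul_of_nonneg_right (by linarith)
          (mul_nonneg (pow_nonneg h1ε.le n) (hW0 0))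
      have h3 : P ≤ lam * B := by
        rw [hBdef, mul_div_assoc', le_div_iff₀ hlamε]
        nlinarith [mul_nonneg (mul_nonneg hP0 hε0.le) (by linarith : (0:ℝ) ≤ 1 - lam)]
      calc W (n + 1) ≤ (1 - lam) * W n + P := step n
        _ ≤ (1 - lam) * ((1 - ε) ^ n * W 0 + B) + P := by linarith
        _ = (1 - lam) * ((1 - ε) ^ n * W 0) + ((1 - lam) * B + P) := by ring
        _ ≤ (1 - ε) * ((1 - ε) ^ n * W 0) + B := by linarith
        _ = (1 - ε) ^ (n + 1) * W 0 + B := by ring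
  set t : ℝ := ‖h (σ k) (x k) - hB (σ k) (xh k)‖ with ht
  have ht0 : 0 ≤ t := norm_nonneg _
  have hWk : α * t ^ b ≤ W k := hlow (σ k) (x k) (xh k)
  have hb' : 0 ≤ 1 / b := by positivity
  have htb : t ^ b ≤ W k / α := by rw [le_div_iff₀ hα]; linarith
  have t_eq : t = (t ^ b) ^ (1 / b) := by
    rw [← Real.rpow_mul ht0, mul_one_div, div_self hb.ne', Real.rpow_one]
  have hW0eq : W 0 = V (σ 0) x₀ xh₀ := rfl
  have hA0 : 0 ≤ (1 - ε) ^ k * W 0 / α :=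
    div_nonneg (mul_nonneg (pow_nonneg h1ε.le k) (hW0 0)) hα.le
  have e1 : (2 * ((1 - ε) ^ k * W 0 / α)) ^ (1 / b) =
      (2 / α) ^ (1 / b) * (1 - ε) ^ ((k : ℝ) / b) * V (σ 0) x₀ xh₀ ^ (1 / b) := by
    rw [← hW0eq, show 2 * ((1 - ε) ^ k * W 0 / α) = 2 / α * (1 - ε) ^ k * W 0 by ring,
      Real.mul_rpow (mul_nonneg (by positivity) (pow_nonneg h1ε.le k)) (hW0 0),
      Real.mul_rpow (by positivity) (pow_nonneg h1ε.le k),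
      ← Real.rpow_natCast (1 - ε) k, ← Real.rpow_mul h1ε.le, mul_one_div]
  have e2 : (2 * (B / α)) ^ (1 / b) =
      (2 * (1 - ε) / (α * (lam - ε)) * ρ_ext r) ^ (1 / b) := by
    rw [hBdef, hP]
    congr 1
    field_simp
  calc t = (t ^ b) ^ (1 / b) := t_eq
    _ ≤ (W k / α) ^ (1 / b) :=
        Real.rpow_le_rpow (Real.rpow_nonneg ht0 b) htb hb'
    _ ≤ (((1 - ε) ^ k * W 0 + B) / α) ^ (1 / b) :=
        Real.rpow_le_rpow (div_nonneg (hW0 k) hα.le)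
          ((div_le_div_iff_of_pos_right hα).mpr (key k)) hb'
    _ = ((1 - ε) ^ k * W 0 / α + B / α) ^ (1 / b) := by rw [add_div]
    _ ≤ (2 * ((1 - ε) ^ k * W 0 / α)) ^ (1 / b) + (2 * (B / α)) ^ (1 / b) :=
        aux_rpow_add hA0 (div_nonneg hB0 hα.le) hb'
    _ = _ := by rw [e1, e2]
end

section
/- Let V : S → X → X̂ → [0,∞) be a simulation function from (X̂,Û,S,f̂,ĥ) to (X,U,S,f,h) with parameters α > 0, b > 0, λ ∈ (0,1), ρ_ext ∈ 𝒦. Then for every switching signal σ : ℕ → S, x₀ ∈ X, x̂₀ ∈ X̂ and abstract input sequence û : ℕ → Û with r := sup_k ‖û(k)‖_Û < ∞, there exists an input sequence u : ℕ → U such that for every ε ∈ (0,λ) the closed-loop trajectories satisfy, for all k ∈ ℕ: V_{σ(k)}(x(k), x̂(k)) ≤ (1−ε)^k V_{σ(0)}(x₀, x̂₀) + ((1−ε)/(λ−ε)) · ρ_ext(r). -/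
/-- If `V` is a simulation function from the abstract switched system
`(Xh, Uh, S, fh, hB)` to the concrete switched system `(X, U, S, f, h)` with
parameters `α > 0`, `b > 0`, `lam ∈ (0,1)`, `ρ_ext ∈ 𝒦`, then for every switching
signal `σ`, initial states `x₀, xh₀` and bounded abstract input sequence `uh`
(with `r = sup_k ‖uh k‖`), there is a concrete input sequence `u` such that for
every `ε ∈ (0, lam)` and all `k`:
`V (σ k) (x k) (xh k) ≤ (1-ε)^k * V (σ 0) x₀ xh₀ + ((1-ε)/(lam-ε)) * ρ_ext r`. -/
theorem simulation_function_decay_along_trajectories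
    {X U Xh Uh S Y : Type*} [NormedAddCommGroup Y] [Nonempty S]
    (f : S → X → U → X) (h : S → X → Y)
    (fh : S → Xh → Uh → Xh) (hB : S → Xh → Y)
    (normUh : Uh → ℝ) (hnormUh : ∀ uh, 0 ≤ normUh uh)
    (V : S → X → Xh → ℝ) (hVnonneg : ∀ s x xh, 0 ≤ V s x xh)
    (α b lam : ℝ) (ρ_ext : ℝ → ℝ)
    (hα : 0 < α) (hb : 0 < b) (hlam0 : 0 < lam) (hlam1 : lam < 1)
    (hρ : ClassK ρ_ext)
    (hlow : ∀ s x xh, α * ‖h s x - hB s xh‖ ^ b ≤ V s x xh)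
    (hdec : ∀ s' s x xh uh, ∃ u : U,
      V s' (f s x u) (fh s xh uh) - V s x xh ≤ -lam * V s x xh + ρ_ext (normUh uh)) :
    ∀ (σ : ℕ → S) (x₀ : X) (xh₀ : Xh) (uh : ℕ → Uh),
      BddAbove (Set.range fun k => normUh (uh k)) →
      ∃ u : ℕ → U, ∀ ε : ℝ, 0 < ε → ε < lam → ∀ k : ℕ,
        V (σ k) (traj f σ u x₀ k) (traj fh σ uh xh₀ k) ≤
          (1 - ε) ^ k * V (σ 0) x₀ xh₀ +
            ((1 - ε) / (lam - ε)) * ρ_ext (⨆ k, normUh (uh k)) := by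
  intro σ x₀ xh₀ uh hbdd
  -- choose inputs recursively
  let p : ℕ → X := fun k => Nat.rec x₀
    (fun k x => f (σ k)
      x (Classical.choose (hdec (σ (k+1)) (σ k) x (traj fh σ uh xh₀ k) (uh k)))) k
  have hp0 : p 0 = x₀ := rfl
  have hpsucc : ∀ k, p (k+1) = f (σ k) (p k)
      (Classical.choose (hdec (σ (k+1)) (σ k) (p k) (traj fh σ uh xh₀ k) (uh k))) :=
    fun k => rfl
  refine ⟨fun k => Classical.choose
      (hdec (σ (k+1)) (σ k) (p k) (traj fh σ uh xh₀ k) (uh k)), ?_⟩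
  set u : ℕ → U := fun k => Classical.choose
      (hdec (σ (k+1)) (σ k) (p k) (traj fh σ uh xh₀ k) (uh k)) with hu
  have htraj : ∀ k, traj f σ u x₀ k = p k := by
    intro k
    induction k with
    | zero => rfl
    | succ k ih => rw [traj, ih, hpsucc]
  -- bound on r
  set r : ℝ := ⨆ k, normUh (uh k) with hr
  have hr0 : 0 ≤ r := le_trans (hnormUh (uh 0)) (le_ciSup hbdd 0)
  have hρmono := hρ.2.1.monotoneOn
  have hρr : ∀ k, ρ_ext (normUh (uh k)) ≤ ρ_ext r := fun k =>
    hρmono (Set.mem_Ici.2 (hnormUh (uh k))) (Set.mem_Ici.2 hr0) (le_ciSup hbdd k)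
  have hρr0 : 0 ≤ ρ_ext r := hρ.2.2.2 r hr0
  -- one step inequality
  have step : ∀ k, V (σ (k+1)) (p (k+1)) (traj fh σ uh xh₀ (k+1)) ≤
      (1 - lam) * V (σ k) (p k) (traj fh σ uh xh₀ k) + ρ_ext r := by
    intro k
    have hc := Classical.choose_spec
      (hdec (σ (k+1)) (σ k) (p k) (traj fh σ uh xh₀ k) (uh k))
    have := hρr k
    rw [hpsucc k]
    show V (σ (k+1)) (f (σ k) (p k) (u k)) (fh (σ k) (traj fh σ uh xh₀ k) (uh k)) ≤ _
    rw [hu]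
    nlinarith [hc, hρr k]
  intro ε hε0 hεlam k
  rw [htraj]
  induction k with
  | zero =>
    simp only [hp0, pow_zero, one_mul, traj]
    have : 0 ≤ (1 - ε) / (lam - ε) * ρ_ext r :=
      mul_nonneg (div_nonneg (by linarith) (by linarith)) hρr0
    linarith
  | succ k ih =>
    have h1ε : (0:ℝ) < 1 - ε := by linarith
    have h1lam : (0:ℝ) ≤ 1 - lam := by linarith
    have hVk := hVnonneg (σ k) (p k) (traj fh σ uh xh₀ k)
    have hpow : (0:ℝ) ≤ (1 - ε) ^ k := le_of_lt (pow_pos h1ε k)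
    have hV0 := hVnonneg (σ 0) x₀ xh₀
    have key : (1 - lam) * ((1 - ε) ^ k * V (σ 0) x₀ xh₀ +
        (1 - ε) / (lam - ε) * ρ_ext r) + ρ_ext r ≤
        (1 - ε) ^ (k+1) * V (σ 0) x₀ xh₀ + (1 - ε) / (lam - ε) * ρ_ext r := by
      have hdiv : (1 - ε) / (lam - ε) = (1 - ε) * (lam - ε)⁻¹ := div_eq_mul_inv _ _
      have hle : (1 - lam) * ((1 - ε) ^ k * V (σ 0) x₀ xh₀) ≤
          (1 - ε) ^ (k+1) * V (σ 0) x₀ xh₀ := by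
        rw [pow_succ]
        nlinarith [mul_nonneg (show (0:ℝ) ≤ lam - ε by linarith)
          (mul_nonneg hpow hV0)]
      have hC : (1 - lam) * ((1 - ε) / (lam - ε) * ρ_ext r) + ρ_ext r ≤
          (1 - ε) / (lam - ε) * ρ_ext r := by
        have hlamε : (0:ℝ) < lam - ε := by linarith
        rw [div_eq_mul_inv]
        have h1 : (1 - lam) * ((1 - ε) * (lam - ε)⁻¹ * ρ_ext r) + ρ_ext r -
            (1 - ε) * (lam - ε)⁻¹ * ρ_ext r =
            ((lam - ε) - lam * (1 - ε)) * (lam - ε)⁻¹ * ρ_ext r := by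
          field_simp
          ring
        have h2 : ((lam - ε) - lam * (1 - ε)) = -ε * (1 - lam) := by ring
        have h3 : ((lam - ε) - lam * (1 - ε)) * (lam - ε)⁻¹ * ρ_ext r ≤ 0 := by
          rw [h2]
          have hinv : (0:ℝ) ≤ (lam - ε)⁻¹ := le_of_lt (inv_pos.2 hlamε)
          nlinarith [mul_nonneg (mul_nonneg (mul_nonneg hε0.le h1lam) hinv) hρr0]
        linarith
      linarith
    calc V (σ (k+1)) (p (k+1)) (traj fh σ uh xh₀ (k+1)) ≤
        (1 - lam) * V (σ k) (p k) (traj fh σ uh xh₀ k) + ρ_ext r := step k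
      _ ≤ (1 - lam) * ((1 - ε) ^ k * V (σ 0) x₀ xh₀ +
          (1 - ε) / (lam - ε) * ρ_ext r) + ρ_ext r := by
          have := mul_le_mul_of_nonneg_left ih h1lam
          linarith
      _ ≤ _ := key
end

section
/- (Theorem 1, aggregation form.) Let p, q ∈ [1,∞) and λ_∞ ∈ (0,1). For each i ∈ ℕ let λ_i ∈ (0,1), α_i ≥ α̲ for some α̲ > 0, ρ_i ∈ [0, ρ̄] for some ρ̄ ≥ 0, and nonnegative gains γ_{ij} ≥ 0 (j ∈ ℕ) with sup_{j∈ℕ} Σ_{i∈ℕ} γ_{ij} < ∞. Let μ_i ∈ [μ̲, μ̄] with 0 < μ̲ ≤ μ̄ satisfy the small-gain inequality Σ_{j∈ℕ} μ_j γ_{ji} ≤ (λ_i − λ_∞) μ_i for every i ∈ ℕ. Suppose nonnegative reals V_i, V_i′, e_i, u_i (i ∈ ℕ) satisfy α_i e_i^p ≤ V_i and V_i′ ≤ (1 − λ_i) V_i + Σ_{j∈ℕ} γ_{ij} V_j + ρ_i u_i^q for every i, and that Σ_{i∈ℕ} μ_i V_i < ∞ and Σ_{i∈ℕ} u_i^q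 < ∞. Then: (a) μ̲ α̲ Σ_{i∈ℕ} e_i^p ≤ Σ_{i∈ℕ} μ_i V_i; and (b) Σ_{i∈ℕ} μ_i V_i′ ≤ (1 − λ_∞) Σ_{i∈ℕ} μ_i V_i + μ̄ ρ̄ Σ_{i∈ℕ} u_i^q. -/
/-- Theorem 1 (aggregation form): under the infinite small-gain condition
`Σ_j μ_j γ_{j i} ≤ (λ_i - λ_∞) μ_i`, the weighted sum `Σ_i μ_i V_i` of the local
simulation functions satisfies the two defining inequalities of a simulation
function for the overall infinite network, with parameters `α = μ̲ α̲`, `b = p`,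
decay rate `λ_∞` and external gain `ρ_ext t = μ̄ ρ̄ t^q`. -/
theorem infinite_network_aggregation
    (p q lamInf : ℝ) (hp : 1 ≤ p) (hq : 1 ≤ q)
    (hlamInf0 : 0 < lamInf) (hlamInf1 : lamInf < 1)
    (lam : ℕ → ℝ) (hlam : ∀ i, 0 < lam i ∧ lam i < 1)
    (α : ℕ → ℝ) (αlow : ℝ) (hαlow : 0 < αlow) (hα : ∀ i, αlow ≤ α i)
    (ρ : ℕ → ℝ) (ρbar : ℝ) (hρbar : 0 ≤ ρbar) (hρ : ∀ i, 0 ≤ ρ i ∧ ρ i ≤ ρbar)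
    (γ : ℕ → ℕ → ℝ) (hγ : ∀ i j, 0 ≤ γ i j)
    (hcol : ∃ C : ℝ, ∀ j, Summable (fun i => γ i j) ∧ (∑' i, γ i j) ≤ C)
    (μ : ℕ → ℝ) (μlow μhigh : ℝ) (hμlow : 0 < μlow) (hμord : μlow ≤ μhigh)
    (hμ : ∀ i, μlow ≤ μ i ∧ μ i ≤ μhigh)
    (hsg : ∀ i, Summable (fun j => μ j * γ j i) ∧
      (∑' j, μ j * γ j i) ≤ (lam i - lamInf) * μ i)
    (V V' e u : ℕ → ℝ)
    (hV : ∀ i, 0 ≤ V i) (hV' : ∀ i, 0 ≤ V' i)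
    (he : ∀ i, 0 ≤ e i) (hu : ∀ i, 0 ≤ u i)
    (hlowB : ∀ i, α i * e i ^ p ≤ V i)
    (hstep : ∀ i, V' i ≤ (1 - lam i) * V i + (∑' j, γ i j * V j) + ρ i * u i ^ q)
    (hsumV : Summable fun i => μ i * V i)
    (hsumU : Summable fun i => u i ^ q) :
    μlow * αlow * (∑' i, e i ^ p) ≤ (∑' i, μ i * V i) ∧
      (∑' i, μ i * V' i) ≤
        (1 - lamInf) * (∑' i, μ i * V i) + μhigh * ρbar * (∑' i, u i ^ q) := by
  have hμpos : ∀ i, 0 < μ i := fun i => lt_of_lt_of_le hμlow (hμ i).1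
  have hep : ∀ i, (0:ℝ) ≤ e i ^ p := fun i => Real.rpow_nonneg (he i) p
  have huq : ∀ i, (0:ℝ) ≤ u i ^ q := fun i => Real.rpow_nonneg (hu i) q
  have hμV : ∀ i, (0:ℝ) ≤ μ i * V i := fun i => mul_nonneg (hμpos i).le (hV i)
  -- part (a)
  have keyA : ∀ i, μlow * αlow * e i ^ p ≤ μ i * V i := by
    intro i
    have h1 : μlow * αlow ≤ μ i * α i :=
      mul_le_mul (hμ i).1 (hα i) hαlow.le (hμpos i).le
    calc μlow * αlow * e i ^ p ≤ μ i * α i * e i ^ p :=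
          mul_le_mul_of_nonneg_right h1 (hep i)
      _ = μ i * (α i * e i ^ p) := by ring
      _ ≤ μ i * V i := mul_le_mul_of_nonneg_left (hlowB i) (hμpos i).le
  have hsumE : Summable fun i => μlow * αlow * e i ^ p :=
    Summable.of_nonneg_of_le (fun i => mul_nonneg (by positivity) (hep i)) keyA hsumV
  have partA : μlow * αlow * (∑' i, e i ^ p) ≤ ∑' i, μ i * V i := by
    rw [← tsum_mul_left]
    exact Summable.tsum_le_tsum keyA hsumE hsumV
  -- nonnegativity of lam j - lamInf
  have hlg : ∀ j, (0:ℝ) ≤ lam j - lamInf := by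
    intro j
    have h0 : (0:ℝ) ≤ ∑' i, μ i * γ i j :=
      tsum_nonneg fun i => mul_nonneg (hμpos j |>.le.trans (le_refl _) |> fun _ => (hμpos i).le) (hγ i j)
    have := (hsg j).2
    nlinarith [hμpos j]
  -- entry bound : μ i * γ i j ≤ μhigh
  have key2 : ∀ i j, μ i * γ i j ≤ μhigh := by
    intro i j
    have h1 : μ i * γ i j ≤ ∑' i', μ i' * γ i' j :=
      Summable.le_tsum (hsg j).1 i fun b _ => mul_nonneg (hμpos b).le (hγ b j)
    have h2 := (hsg j).2
    have h3 : (lam j - lamInf) * μ j ≤ 1 * μhigh :=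
      mul_le_mul (by linarith [(hlam j).2, hlamInf0.le]) (hμ j).2 (hμpos j).le one_pos.le
    linarith
  -- row summability
  have hrowle : ∀ i j, γ i j * V j ≤ μhigh * (μ j * V j) / (μlow * μlow) := by
    intro i j
    rw [le_div_iff₀ (by positivity : (0:ℝ) < μlow * μlow)]
    have h1 : μlow * μlow ≤ μ i * μ j :=
      mul_le_mul (hμ i).1 (hμ j).1 hμlow.le (hμpos i).le
    have h2 := key2 i j
    nlinarith [hγ i j, hV j, hμpos i, hμpos j, mul_nonneg (hγ i j) (hV j),
      mul_le_mul_of_nonneg_right h2 (mul_nonneg (hμpos j).le (hV j))]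
  have hrow : ∀ i, Summable fun j => γ i j * V j := by
    intro i
    exact Summable.of_nonneg_of_le (fun j => mul_nonneg (hγ i j) (hV j)) (hrowle i)
      ((hsumV.mul_left μhigh).div_const _)
  set T : ℕ → ℝ := fun i => ∑' j, γ i j * V j with hT
  have hTnn : ∀ i, 0 ≤ T i := fun i => tsum_nonneg fun j => mul_nonneg (hγ i j) (hV j)
  -- ENNReal double sum
  set F : ℕ → ℕ → ENNReal := fun i j => ENNReal.ofReal (μ i * (γ i j * V j)) with hF
  have h1 : ∀ i, ENNReal.ofReal (μ i * T i) = ∑' j, F i j := by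
    intro i
    have : μ i * T i = ∑' j, μ i * (γ i j * V j) := (tsum_mul_left).symm
    rw [this]
    exact ENNReal.ofReal_tsum_of_nonneg
      (fun j => mul_nonneg (hμpos i).le (mul_nonneg (hγ i j) (hV j))) ((hrow i).mul_left _)
  have h2 : ∀ j, ∑' i, F i j = ENNReal.ofReal ((∑' i, μ i * γ i j) * V j) := by
    intro j
    have hs : Summable fun i => μ i * γ i j * V j := (hsg j).1.mul_right (V j)
    have : ∀ i, F i j = ENNReal.ofReal (μ i * γ i j * V j) := by
      intro i; simp [hF, mul_assoc]
    rw [tsum_congr this, ← ENNReal.ofReal_tsum_of_nonneg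
      (fun i => mul_nonneg (mul_nonneg (hμpos i).le (hγ i j)) (hV j)) hs, tsum_mul_right]
  set W : ℕ → ℝ := fun j => (lam j - lamInf) * (μ j * V j) with hW
  have hWnn : ∀ j, 0 ≤ W j := fun j => mul_nonneg (hlg j) (hμV j)
  have hWle : ∀ j, W j ≤ μ j * V j := by
    intro j
    have : lam j - lamInf ≤ 1 := by linarith [(hlam j).2, hlamInf0.le]
    calc W j ≤ 1 * (μ j * V j) := mul_le_mul_of_nonneg_right this (hμV j)
      _ = μ j * V j := one_mul _
  have hsumW : Summable W := Summable.of_nonneg_of_le hWnn hWle hsumV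
  have h3 : ∀ j, (∑' i, μ i * γ i j) * V j ≤ W j := by
    intro j
    exact (mul_le_mul_of_nonneg_right (hsg j).2 (hV j)).trans_eq (by rw [hW]; ring)
  have hENN : (∑' i, ENNReal.ofReal (μ i * T i)) ≤ ENNReal.ofReal (∑' j, W j) := by
    calc (∑' i, ENNReal.ofReal (μ i * T i)) = ∑' i, ∑' j, F i j := tsum_congr h1
      _ = ∑' j, ∑' i, F i j := ENNReal.tsum_comm
      _ = ∑' j, ENNReal.ofReal ((∑' i, μ i * γ i j) * V j) := tsum_congr h2
      _ ≤ ∑' j, ENNReal.ofReal (W j) :=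
          ENNReal.tsum_le_tsum fun j => ENNReal.ofReal_le_ofReal (h3 j)
      _ = ENNReal.ofReal (∑' j, W j) := (ENNReal.ofReal_tsum_of_nonneg hWnn hsumW).symm
  have hsumT : Summable fun i => μ i * T i := by
    have hfin : (∑' i, ENNReal.ofReal (μ i * T i)) ≠ ⊤ :=
      ne_top_of_le_ne_top ENNReal.ofReal_ne_top hENN
    have := ENNReal.summable_toReal hfin
    refine this.congr fun i => ?_
    exact ENNReal.toReal_ofReal (mul_nonneg (hμpos i).le (hTnn i))
  have hTbound : (∑' i, μ i * T i) ≤ ∑' j, W j := by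
    have := (ENNReal.ofReal_tsum_of_nonneg
      (fun i => mul_nonneg (hμpos i).le (hTnn i)) hsumT) ▸ hENN
    exact (ENNReal.ofReal_le_ofReal_iff (tsum_nonneg hWnn)).mp this
  -- assemble part (b)
  have s1le : ∀ i, μ i * ((1 - lam i) * V i) ≤ μ i * V i := by
    intro i
    have : (1 - lam i) * V i ≤ V i := by
      nlinarith [(hlam i).1, (hlam i).2, hV i]
    exact mul_le_mul_of_nonneg_left this (hμpos i).le
  have s1nn : ∀ i, 0 ≤ μ i * ((1 - lam i) * V i) := fun i =>
    mul_nonneg (hμpos i).le (mul_nonneg (by linarith [(hlam i).2]) (hV i))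
  have s1 : Summable fun i => μ i * ((1 - lam i) * V i) :=
    Summable.of_nonneg_of_le s1nn s1le hsumV
  have s3le : ∀ i, μ i * (ρ i * u i ^ q) ≤ μhigh * ρbar * u i ^ q := by
    intro i
    have h1 : μ i * ρ i ≤ μhigh * ρbar :=
      mul_le_mul (hμ i).2 (hρ i).2 (hρ i).1 (hμlow.le.trans hμord)
    calc μ i * (ρ i * u i ^ q) = μ i * ρ i * u i ^ q := by ring
      _ ≤ μhigh * ρbar * u i ^ q := mul_le_mul_of_nonneg_right h1 (huq i)
  have s3nn : ∀ i, 0 ≤ μ i * (ρ i * u i ^ q) := fun i =>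
    mul_nonneg (hμpos i).le (mul_nonneg (hρ i).1 (huq i))
  have s3 : Summable fun i => μ i * (ρ i * u i ^ q) :=
    Summable.of_nonneg_of_le s3nn s3le (hsumU.mul_left _)
  set g : ℕ → ℝ := fun i => μ i * ((1 - lam i) * V i) + μ i * T i + μ i * (ρ i * u i ^ q)
    with hg
  have hsumg : Summable g := (s1.add hsumT).add s3
  have hV'le : ∀ i, μ i * V' i ≤ g i := by
    intro i
    have := hstep i
    have h1 : μ i * V' i ≤ μ i * ((1 - lam i) * V i + T i + ρ i * u i ^ q) :=
      mul_le_mul_of_nonneg_left this (hμpos i).le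
    calc μ i * V' i ≤ μ i * ((1 - lam i) * V i + T i + ρ i * u i ^ q) := h1
      _ = g i := by rw [hg]; ring
  have hsumV' : Summable fun i => μ i * V' i :=
    Summable.of_nonneg_of_le (fun i => mul_nonneg (hμpos i).le (hV' i)) hV'le hsumg
  have step1 : (∑' i, μ i * V' i) ≤ ∑' i, g i := Summable.tsum_le_tsum hV'le hsumV' hsumg
  have step2 : (∑' i, g i) = (∑' i, μ i * ((1 - lam i) * V i)) + (∑' i, μ i * T i)
      + (∑' i, μ i * (ρ i * u i ^ q)) := by
    rw [Summable.tsum_add (s1.add hsumT) s3, Summable.tsum_add s1 hsumT]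
  have step3 : (∑' i, μ i * ((1 - lam i) * V i)) + (∑' j, W j)
      = (1 - lamInf) * ∑' i, μ i * V i := by
    rw [← tsum_mul_left, ← Summable.tsum_add s1 hsumW]
    refine tsum_congr fun i => ?_
    rw [hW]; ring
  have step4 : (∑' i, μ i * (ρ i * u i ^ q)) ≤ μhigh * ρbar * ∑' i, u i ^ q := by
    rw [← tsum_mul_left]
    exact Summable.tsum_le_tsum s3le s3 (hsumU.mul_left _)
  refine ⟨partA, ?_⟩
  calc (∑' i, μ i * V' i) ≤ (∑' i, g i) := step1
    _ = (∑' i, μ i * ((1 - lam i) * V i)) + (∑' i, μ i * T i)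
        + (∑' i, μ i * (ρ i * u i ^ q)) := step2
    _ ≤ (∑' i, μ i * ((1 - lam i) * V i)) + (∑' j, W j)
        + (μhigh * ρbar * ∑' i, u i ^ q) := by
        gcongr
    _ = (1 - lamInf) * (∑' i, μ i * V i) + μhigh * ρbar * (∑' i, u i ^ q) := by
        rw [step3]
end

section
/- (Theorem 2, scale-free truncation.) Let p, q ∈ [1,∞) and λ_∞ ∈ (0,1). For each i ∈ ℕ let λ_i ∈ (0,1), α_i ≥ α̲ for some α̲ > 0, ρ_i ∈ [0, ρ̄] for some ρ̄ ≥ 0, and nonnegative gains γ_{ij} ≥ 0 (j ∈ ℕ), and let μ_i ∈ [μ̲, μ̄] with 0 < μ̲ ≤ μ̄ satisfy Σ_{j∈ℕ} μ_j γ_{ji} ≤ (λ_i − λ_∞) μ_i for every i ∈ ℕ. Fix n ∈ ℕ and suppose nonnegative reals V_i, V_i′, e_i, u_i, w̃_i (1 ≤ i ≤ n) satisfy α_i e_i^p ≤ V_i and V_i′ ≤ (1 − λ_i) V_i + Σ_{j=1}^{n} γ_{ij} V_j + ρ_i u_i^q + ρ_i w̃_i^q for every i ≤ n. Then: (a) μ̲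 α̲ Σ_{i=1}^{n} e_i^p ≤ Σ_{i=1}^{n} μ_i V_i; and (b) Σ_{i=1}^{n} μ_i V_i′ ≤ (1 − λ_∞) Σ_{i=1}^{n} μ_i V_i + μ̄ ρ̄ Σ_{i=1}^{n} u_i^q + μ̄ ρ̄ Σ_{i=1}^{n} w̃_i^q. In particular, the decay rate λ_∞ and the gains with respect to external inputs are independent of the truncation size n. -/
/-- Theorem 2 (scale-free truncation): if the weight vector `μ` satisfies the
infinite small-gain condition `Σ_j μ_j γ_{j i} ≤ (λ_i - λ_∞) μ_i` over all of ℕ,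
then for every truncation size `n` the truncated weighted sum
`Σ_{i<n} μ_i V_i` satisfies the simulation-function inequalities with the same
parameters `α = μ̲ α̲`, `b = p`, decay rate `λ_∞` and external gain
`ρ_ext t = μ̄ ρ̄ t^q` as the infinite network, the inputs generated by the
discarded subsystems appearing as the additional external terms `wt_i`. -/
theorem truncated_network_aggregation
    (p q lamInf : ℝ) (hp : 1 ≤ p) (hq : 1 ≤ q)
    (hlamInf0 : 0 < lamInf) (hlamInf1 : lamInf < 1)
    (lam : ℕ → ℝ) (hlam : ∀ i, 0 < lam i ∧ lam i < 1)
    (α : ℕ → ℝ) (αlow : ℝ) (hαlow : 0 < αlow) (hα : ∀ i, αlow ≤ α i)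
    (ρ : ℕ → ℝ) (ρbar : ℝ) (hρbar : 0 ≤ ρbar) (hρ : ∀ i, 0 ≤ ρ i ∧ ρ i ≤ ρbar)
    (γ : ℕ → ℕ → ℝ) (hγ : ∀ i j, 0 ≤ γ i j)
    (μ : ℕ → ℝ) (μlow μhigh : ℝ) (hμlow : 0 < μlow) (hμord : μlow ≤ μhigh)
    (hμ : ∀ i, μlow ≤ μ i ∧ μ i ≤ μhigh)
    (hsg : ∀ i, Summable (fun j => μ j * γ j i) ∧
      (∑' j, μ j * γ j i) ≤ (lam i - lamInf) * μ i)
    (n : ℕ)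
    (V V' e u wt : ℕ → ℝ)
    (hV : ∀ i < n, 0 ≤ V i) (hV' : ∀ i < n, 0 ≤ V' i)
    (he : ∀ i < n, 0 ≤ e i) (hu : ∀ i < n, 0 ≤ u i) (hwt : ∀ i < n, 0 ≤ wt i)
    (hlowB : ∀ i < n, α i * e i ^ p ≤ V i)
    (hstep : ∀ i < n, V' i ≤ (1 - lam i) * V i +
      (∑ j ∈ Finset.range n, γ i j * V j) + ρ i * u i ^ q + ρ i * wt i ^ q) :
    μlow * αlow * (∑ i ∈ Finset.range n, e i ^ p) ≤
        (∑ i ∈ Finset.range n, μ i * V i) ∧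
      (∑ i ∈ Finset.range n, μ i * V' i) ≤
        (1 - lamInf) * (∑ i ∈ Finset.range n, μ i * V i) +
          μhigh * ρbar * (∑ i ∈ Finset.range n, u i ^ q) +
          μhigh * ρbar * (∑ i ∈ Finset.range n, wt i ^ q) := by

  have hμ0 : ∀ i, 0 ≤ μ i := fun i => le_of_lt (lt_of_lt_of_le hμlow (hμ i).1)
  constructor
  · rw [Finset.mul_sum]
    refine Finset.sum_le_sum fun i hi => ?_
    have hi' := Finset.mem_range.mp hi
    have hep : 0 ≤ e i ^ p := Real.rpow_nonneg (he i hi') p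
    calc μlow * αlow * e i ^ p ≤ μ i * (α i * e i ^ p) := by
          rw [← mul_assoc]
          exact mul_le_mul_of_nonneg_right
            (mul_le_mul (hμ i).1 (hα i) hαlow.le (hμ0 i)) hep
      _ ≤ μ i * V i := mul_le_mul_of_nonneg_left (hlowB i hi') (hμ0 i)
  · have step1 : (∑ i ∈ Finset.range n, μ i * V' i) ≤
        ∑ i ∈ Finset.range n, (μ i * ((1 - lam i) * V i) +
          (∑ j ∈ Finset.range n, μ i * (γ i j * V j)) +
          μ i * (ρ i * u i ^ q) + μ i * (ρ i * wt i ^ q)) := by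
      refine Finset.sum_le_sum fun i hi => ?_
      have hi' := Finset.mem_range.mp hi
      have := mul_le_mul_of_nonneg_left (hstep i hi') (hμ0 i)
      calc μ i * V' i ≤ μ i * ((1 - lam i) * V i +
            (∑ j ∈ Finset.range n, γ i j * V j) + ρ i * u i ^ q + ρ i * wt i ^ q) := this
        _ = _ := by rw [mul_add, mul_add, mul_add, Finset.mul_sum]
    have swap : (∑ i ∈ Finset.range n, ∑ j ∈ Finset.range n, μ i * (γ i j * V j)) ≤
        ∑ j ∈ Finset.range n, (lam j - lamInf) * μ j * V j := by
      rw [Finset.sum_comm]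
      refine Finset.sum_le_sum fun j hj => ?_
      have hj' := Finset.mem_range.mp hj
      have hVj := hV j hj'
      have hsum : (∑ i ∈ Finset.range n, μ i * γ i j) ≤ (lam j - lamInf) * μ j := by
        refine le_trans ?_ (hsg j).2
        exact Summable.sum_le_tsum _ (fun i _ => mul_nonneg (hμ0 i) (hγ i j)) (hsg j).1
      calc (∑ i ∈ Finset.range n, μ i * (γ i j * V j))
          = (∑ i ∈ Finset.range n, μ i * γ i j) * V j := by
            rw [Finset.sum_mul]; congr 1; ext i; ring
        _ ≤ (lam j - lamInf) * μ j * V j := mul_le_mul_of_nonneg_right hsum hVj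
    have hext : ∀ (f : ℕ → ℝ), (∀ i < n, 0 ≤ f i) →
        (∑ i ∈ Finset.range n, μ i * (ρ i * f i ^ q)) ≤
          μhigh * ρbar * (∑ i ∈ Finset.range n, f i ^ q) := by
      intro f hf
      rw [Finset.mul_sum]
      refine Finset.sum_le_sum fun i hi => ?_
      have hi' := Finset.mem_range.mp hi
      have hfq : 0 ≤ f i ^ q := Real.rpow_nonneg (hf i hi') q
      rw [← mul_assoc]
      exact mul_le_mul_of_nonneg_right
        (mul_le_mul (hμ i).2 (hρ i).2 (hρ i).1 (le_trans hμlow.le hμord)) hfq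
    have key : (∑ i ∈ Finset.range n, (μ i * ((1 - lam i) * V i) +
          (∑ j ∈ Finset.range n, μ i * (γ i j * V j)) +
          μ i * (ρ i * u i ^ q) + μ i * (ρ i * wt i ^ q))) ≤
        (1 - lamInf) * (∑ i ∈ Finset.range n, μ i * V i) +
          μhigh * ρbar * (∑ i ∈ Finset.range n, u i ^ q) +
          μhigh * ρbar * (∑ i ∈ Finset.range n, wt i ^ q) := by
      rw [Finset.sum_add_distrib, Finset.sum_add_distrib, Finset.sum_add_distrib]
      have h1 : (∑ i ∈ Finset.range n, μ i * ((1 - lam i) * V i)) +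
          (∑ i ∈ Finset.range n, ∑ j ∈ Finset.range n, μ i * (γ i j * V j)) ≤
          (1 - lamInf) * (∑ i ∈ Finset.range n, μ i * V i) := by
        calc _ ≤ (∑ i ∈ Finset.range n, μ i * ((1 - lam i) * V i)) +
              ∑ j ∈ Finset.range n, (lam j - lamInf) * μ j * V j := by linarith [swap]
          _ = (1 - lamInf) * (∑ i ∈ Finset.range n, μ i * V i) := by
              rw [Finset.mul_sum, ← Finset.sum_add_distrib]
              congr 1; ext i; ring
      linarith [h1, hext u hu, hext wt hwt]
    exact le_trans step1 key
end

section
/- (Construction of simulation functions for linear switched systems.) Let S be a nonempty mode set and, for each s ∈ S, let real matrices A_s (n×n), B_s (n×m), C_s (q×n), D_s (n×r) describe the concrete system and Â_s (n̂×n̂), B̂_s (n̂×m̂), Ĉ_s (q×n̂), D̂_s (n̂×r) the abstract system; let K_s (m×n), P_s (n×n̂), Q_s (m×n̂), T_s (m×r), R_s (m×m̂) be given matrices, M_s (n×n) symmetric positive definite, and ε > 0, κ ∈ (0,1), τ ≥ 1 with τκ < 1. Define V_s(x,x̂) := (x − P_s x̂)ᵀ M_s (x − P_s x̂). Assume for every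 s ∈ S: (i) C_sᵀ C_s ⪯ M_s; (ii) (1 + 1/ε + ε)(A_s + B_s K_s)ᵀ M_s (A_s + B_s K_s) ⪯ κ M_s; (iii) A_s P_s = P_s Â_s − B_s Q_s; (iv) D_s = P_s D̂_s − B_s T_s; (v) C_s P_s = Ĉ_s; and (vi) V_s(x,x̂) ≤ τ V_{s′}(x,x̂) for all s, s′ ∈ S, x ∈ ℝⁿ, x̂ ∈ ℝ^{n̂}. Then for all s′, s ∈ S, all x ∈ ℝⁿ, x̂ ∈ ℝ^{n̂}, û ∈ ℝ^{m̂}, w, ŵ ∈ ℝ^{r}, with the interface input u := K_s(x − P_s x̂) + Q_s x̂ + R_s û + T_s ŵ: (a) ‖C_s x − Ĉ_s x̂‖² ≤ V_s(x,x̂); and (b) V_{s′}(A_s x + B_s u + D_s w, Â_s x̂ + B̂_s û + D̂_s ŵ) − V_s(x,x̂) ≤ −(1 − τκ) V_s(x,x̂) + τ(1 + ε + 1/ε)‖M_s^{1/2} D_s‖² ‖w − ŵ‖² + τ(1 + ε + 1/ε)‖M_s^{1/2}(B_s R_s − P_s B̂_s)‖² ‖û‖². -/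
open Matrix

/-- The Euclidean norm of a vector in `ℝⁿ`. -/
noncomputable def euclNorm {n : ℕ} (v : Fin n → ℝ) : ℝ :=
  ‖(WithLp.equiv 2 (Fin n → ℝ)).symm v‖

/-- The spectral (ℓ²-operator) norm of a real matrix. -/
noncomputable def specNorm {m n : ℕ} (A : Matrix (Fin m) (Fin n) ℝ) : ℝ :=
  ‖LinearMap.toContinuousLinearMap (Matrix.toEuclideanLin A)‖

/-- The positive semidefinite square root of a positive semidefinite matrix
(the former `Matrix.PosSemidef.sqrt`, with its old definition). -/
noncomputable def posSemidefSqrt {n : ℕ} {M : Matrix (Fin n) (Fin n) ℝ}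
    (hA : M.PosSemidef) : Matrix (Fin n) (Fin n) ℝ :=
  hA.1.eigenvectorUnitary.1 * diagonal ((↑) ∘ (√·) ∘ hA.1.eigenvalues) *
  (star hA.1.eigenvectorUnitary : Matrix (Fin n) (Fin n) ℝ)

/-!
With `e = x - P_s x̂` and `M_s^{1/2}` the square root of `M_s`, `V_s(x, x̂) = ‖M_s^{1/2} e‖²`.
Conditions (iii) and (iv) turn the error after one step into
`(A_s + B_s K_s) e + D_s (w - ŵ) + (B_s R_s - P_s B̂_s) û`. Young's inequality
`(a + b + c)² ≤ (1 + ε + 1/ε)(a² + b² + c²)` separates the three terms: by (ii) the first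
contributes at most `κ V_s(x, x̂)`, the other two are bounded through spectral norms, and (vi)
costs a factor `τ` for passing from `V_s` to `V_{s'}`. Part (a) is (i) together with (v).
-/

lemma add_add_sq_le (x y z : ℝ) {ε : ℝ} (hε : 0 < ε) :
    (x + y + z) ^ 2 ≤ (1 + ε + 1 / ε) * (x ^ 2 + y ^ 2 + z ^ 2) := by
  have young : ∀ a b : ℝ, 2 * a * b ≤ ε * a ^ 2 + 1 / ε * b ^ 2 := fun a b => by
    rw [← sub_nonneg]
    have hsq : ε * a ^ 2 + 1 / ε * b ^ 2 - 2 * a * b = (ε * a - b) ^ 2 / ε := by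
      field_simp; ring
    rw [hsq]; positivity
  nlinarith [young x y, young z x, young y z]

section

variable {k l n m nh mh r : ℕ}

lemma posSemidefSqrt_mul_self {M : Matrix (Fin n) (Fin n) ℝ} (hM : M.PosSemidef) :
    posSemidefSqrt hM * posSemidefSqrt hM = M := by
  have hU : (star hM.1.eigenvectorUnitary : Matrix (Fin n) (Fin n) ℝ) *
      hM.1.eigenvectorUnitary.1 = 1 :=
    Unitary.coe_star_mul_self _
  conv_rhs => rw [hM.1.spectral_theorem, Unitary.conjStarAlgAut_apply]
  simp only [posSemidefSqrt, Matrix.mul_assoc]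
  rw [← Matrix.mul_assoc (star _), hU, Matrix.one_mul, ← Matrix.mul_assoc (diagonal _),
    diagonal_mul_diagonal]
  congr 3
  funext i
  simp [Real.mul_self_sqrt (hM.eigenvalues_nonneg i)]

lemma posSemidefSqrt_transpose {M : Matrix (Fin n) (Fin n) ℝ} (hM : M.PosSemidef) :
    (posSemidefSqrt hM)ᵀ = posSemidefSqrt hM := by
  rw [← conjTranspose_eq_transpose_of_trivial]
  simp [posSemidefSqrt, Matrix.mul_assoc, Matrix.star_eq_conjTranspose]

lemma euclNorm_sq (v : Fin n → ℝ) : euclNorm v ^ 2 = v ⬝ᵥ v := by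
  rw [euclNorm, EuclideanSpace.norm_sq_eq]
  simp [dotProduct, sq]

lemma euclNorm_add_le (u v : Fin n → ℝ) : euclNorm (u + v) ≤ euclNorm u + euclNorm v := by
  simpa [euclNorm] using norm_add_le _ _

lemma euclNorm_mulVec_le (A : Matrix (Fin k) (Fin n) ℝ) (v : Fin n → ℝ) :
    euclNorm (A *ᵥ v) ≤ specNorm A * euclNorm v := by
  simpa [specNorm, euclNorm] using
    (LinearMap.toContinuousLinearMap (Matrix.toEuclideanLin A)).le_opNorm
      ((WithLp.equiv 2 (Fin n → ℝ)).symm v)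

lemma euclNorm_mulVec_sq_le (A : Matrix (Fin k) (Fin n) ℝ) (v : Fin n → ℝ) :
    euclNorm (A *ᵥ v) ^ 2 ≤ specNorm A ^ 2 * euclNorm v ^ 2 := by
  rw [← mul_pow]
  exact pow_le_pow_left₀ (norm_nonneg _) (euclNorm_mulVec_le A v) 2

lemma dotProduct_transpose_mul_mulVec (G : Matrix (Fin k) (Fin n) ℝ)
    (F : Matrix (Fin k) (Fin l) ℝ) (x : Fin n → ℝ) (y : Fin l → ℝ) :
    x ⬝ᵥ (Gᵀ * F) *ᵥ y = (G *ᵥ x) ⬝ᵥ (F *ᵥ y) := by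
  rw [← mulVec_mulVec, dotProduct_mulVec, vecMul_transpose]

lemma dotProduct_mulVec_eq_euclNorm_sqrt_sq {M : Matrix (Fin n) (Fin n) ℝ}
    (hM : M.PosSemidef) (v : Fin n → ℝ) :
    v ⬝ᵥ M *ᵥ v = euclNorm (posSemidefSqrt hM *ᵥ v) ^ 2 := by
  conv_lhs => rw [← posSemidefSqrt_mul_self hM, ← posSemidefSqrt_transpose hM]
  rw [dotProduct_transpose_mul_mulVec, posSemidefSqrt_transpose, euclNorm_sq]

lemma dotProduct_mulVec_le_of_posSemidef_sub {X Y : Matrix (Fin n) (Fin n) ℝ}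
    (h : (X - Y).PosSemidef) (v : Fin n → ℝ) : v ⬝ᵥ Y *ᵥ v ≤ v ⬝ᵥ X *ᵥ v := by
  have := h.dotProduct_mulVec_nonneg v
  rw [star_trivial, sub_mulVec, dotProduct_sub] at this
  linarith

lemma euclNorm_add_add_sq_le (a b c : Fin n → ℝ) {ε : ℝ} (hε : 0 < ε) :
    euclNorm (a + b + c) ^ 2 ≤
      (1 + ε + 1 / ε) * (euclNorm a ^ 2 + euclNorm b ^ 2 + euclNorm c ^ 2) :=
  calc euclNorm (a + b + c) ^ 2 ≤ (euclNorm a + euclNorm b + euclNorm c) ^ 2 :=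
        pow_le_pow_left₀ (norm_nonneg _)
          ((euclNorm_add_le _ _).trans (by gcongr; exact euclNorm_add_le _ _)) 2
    _ ≤ _ := add_add_sq_le _ _ _ hε

lemma euclNorm_mulVec_sq_le_of_posSemidef_sub {C : Matrix (Fin k) (Fin n) ℝ}
    {M : Matrix (Fin n) (Fin n) ℝ} (h : (M - Cᵀ * C).PosSemidef) (v : Fin n → ℝ) :
    euclNorm (C *ᵥ v) ^ 2 ≤ v ⬝ᵥ M *ᵥ v := by
  rw [euclNorm_sq, ← dotProduct_transpose_mul_mulVec]
  exact dotProduct_mulVec_le_of_posSemidef_sub h v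

lemma closedLoop_error_eq (A : Matrix (Fin n) (Fin n) ℝ) (B : Matrix (Fin n) (Fin m) ℝ)
    (D : Matrix (Fin n) (Fin r) ℝ) (Ah : Matrix (Fin nh) (Fin nh) ℝ)
    (Bh : Matrix (Fin nh) (Fin mh) ℝ) (Dh : Matrix (Fin nh) (Fin r) ℝ)
    (K : Matrix (Fin m) (Fin n) ℝ) (P : Matrix (Fin n) (Fin nh) ℝ)
    (Q : Matrix (Fin m) (Fin nh) ℝ) (T : Matrix (Fin m) (Fin r) ℝ)
    (R : Matrix (Fin m) (Fin mh) ℝ) (hAP : A * P = P * Ah - B * Q) (hD : D = P * Dh - B * T)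
    (x : Fin n → ℝ) (xh : Fin nh → ℝ) (uh : Fin mh → ℝ) (w wh : Fin r → ℝ) :
    A *ᵥ x + B *ᵥ (K *ᵥ (x - P *ᵥ xh) + Q *ᵥ xh + R *ᵥ uh + T *ᵥ wh) + D *ᵥ w -
        P *ᵥ (Ah *ᵥ xh + Bh *ᵥ uh + Dh *ᵥ wh) =
      (A + B * K) *ᵥ (x - P *ᵥ xh) + D *ᵥ (w - wh) + (B * R - P * Bh) *ᵥ uh := by
  have hPAh : P * Ah = A * P + B * Q := sub_eq_iff_eq_add.mp hAP.symm
  subst hD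
  simp only [mulVec_add, mulVec_sub, add_mulVec, sub_mulVec, mulVec_mulVec, hPAh,
    Matrix.mul_assoc, Matrix.add_mul]
  abel

lemma quadForm_closedLoop_le {M F : Matrix (Fin n) (Fin n) ℝ} {D : Matrix (Fin n) (Fin r) ℝ}
    {G : Matrix (Fin n) (Fin m) ℝ} (hM : M.PosSemidef) {ε κ : ℝ} (hε : 0 < ε)
    (hF : (κ • M - (1 + 1 / ε + ε) • (Fᵀ * M * F)).PosSemidef)
    (e : Fin n → ℝ) (d : Fin r → ℝ) (u : Fin m → ℝ) :
    (F *ᵥ e + D *ᵥ d + G *ᵥ u) ⬝ᵥ M *ᵥ (F *ᵥ e + D *ᵥ d + G *ᵥ u) ≤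
      κ * (e ⬝ᵥ M *ᵥ e) +
        (1 + ε + 1 / ε) * specNorm (posSemidefSqrt hM * D) ^ 2 * euclNorm d ^ 2 +
        (1 + ε + 1 / ε) * specNorm (posSemidefSqrt hM * G) ^ 2 * euclNorm u ^ 2 := by
  set L := posSemidefSqrt hM
  have hFe : (1 + ε + 1 / ε) * euclNorm (L *ᵥ F *ᵥ e) ^ 2 ≤ κ * (e ⬝ᵥ M *ᵥ e) := by
    have := dotProduct_mulVec_le_of_posSemidef_sub hF e
    rw [smul_mulVec, smul_mulVec, dotProduct_smul, dotProduct_smul, Matrix.mul_assoc,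
      dotProduct_transpose_mul_mulVec, ← mulVec_mulVec,
      dotProduct_mulVec_eq_euclNorm_sqrt_sq hM] at this
    simpa only [smul_eq_mul, add_right_comm _ (1 / ε)] using this
  rw [dotProduct_mulVec_eq_euclNorm_sqrt_sq hM, mulVec_add, mulVec_add, mulVec_mulVec d,
    mulVec_mulVec u]
  have hc : 0 ≤ 1 + ε + 1 / ε := by positivity
  calc _ ≤ (1 + ε + 1 / ε) * (euclNorm (L *ᵥ F *ᵥ e) ^ 2 + euclNorm ((L * D) *ᵥ d) ^ 2 +
        euclNorm ((L * G) *ᵥ u) ^ 2) := euclNorm_add_add_sq_le _ _ _ hε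
    _ ≤ _ := by
      nlinarith [mul_le_mul_of_nonneg_left (euclNorm_mulVec_sq_le (L * D) d) hc,
        mul_le_mul_of_nonneg_left (euclNorm_mulVec_sq_le (L * G) u) hc]

end

theorem linear_switched_simulation_function_general
    {S : Type*} {n m q nh mh r : ℕ}
    (A : S → Matrix (Fin n) (Fin n) ℝ) (B : S → Matrix (Fin n) (Fin m) ℝ)
    (C : S → Matrix (Fin q) (Fin n) ℝ) (D : S → Matrix (Fin n) (Fin r) ℝ)
    (Ah : S → Matrix (Fin nh) (Fin nh) ℝ) (Bh : S → Matrix (Fin nh) (Fin mh) ℝ)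
    (Ch : S → Matrix (Fin q) (Fin nh) ℝ) (Dh : S → Matrix (Fin nh) (Fin r) ℝ)
    (K : S → Matrix (Fin m) (Fin n) ℝ) (P : S → Matrix (Fin n) (Fin nh) ℝ)
    (Q : S → Matrix (Fin m) (Fin nh) ℝ) (T : S → Matrix (Fin m) (Fin r) ℝ)
    (R : S → Matrix (Fin m) (Fin mh) ℝ)
    (M : S → Matrix (Fin n) (Fin n) ℝ) (hM : ∀ s, (M s).PosDef)
    (ε κ τ : ℝ) (hε : 0 < ε) (hτ : 1 ≤ τ)
    (V : S → (Fin n → ℝ) → (Fin nh → ℝ) → ℝ)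
    (hVdef : ∀ s x xh,
      V s x xh = (x - (P s).mulVec xh) ⬝ᵥ (M s).mulVec (x - (P s).mulVec xh))
    (hi : ∀ s, (M s - (C s)ᵀ * C s).PosSemidef)
    (hii : ∀ s, (κ • M s -
      (1 + 1 / ε + ε) • ((A s + B s * K s)ᵀ * M s * (A s + B s * K s))).PosSemidef)
    (hiii : ∀ s, A s * P s = P s * Ah s - B s * Q s)
    (hiv : ∀ s, D s = P s * Dh s - B s * T s)
    (hv : ∀ s, C s * P s = Ch s)
    (hvi : ∀ s s' x xh, V s x xh ≤ τ * V s' x xh) :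
    ∀ (s' s : S) (x : Fin n → ℝ) (xh : Fin nh → ℝ) (uh : Fin mh → ℝ)
      (w wh : Fin r → ℝ),
      euclNorm ((C s).mulVec x - (Ch s).mulVec xh) ^ 2 ≤ V s x xh ∧
      V s'
          ((A s).mulVec x +
            (B s).mulVec ((K s).mulVec (x - (P s).mulVec xh) +
              (Q s).mulVec xh + (R s).mulVec uh + (T s).mulVec wh) +
            (D s).mulVec w)
          ((Ah s).mulVec xh + (Bh s).mulVec uh + (Dh s).mulVec wh) -
        V s x xh ≤
      -(1 - τ * κ) * V s x xh +
        τ * (1 + ε + 1 / ε) * specNorm (posSemidefSqrt (hM s).posSemidef * D s) ^ 2 *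
          euclNorm (w - wh) ^ 2 +
        τ * (1 + ε + 1 / ε) *
          specNorm (posSemidefSqrt (hM s).posSemidef * (B s * R s - P s * Bh s)) ^ 2 *
          euclNorm uh ^ 2 := by
  intro s' s x xh uh w wh
  constructor
  · rw [hVdef, ← hv, ← mulVec_mulVec, ← mulVec_sub]
    exact euclNorm_mulVec_sq_le_of_posSemidef_sub (hi s) _
  · calc _ ≤ τ * V s _ _ - V s x xh := sub_le_sub_right (hvi s' s _ _) _
      _ ≤ τ * (κ * V s x xh +
            (1 + ε + 1 / ε) * specNorm (posSemidefSqrt (hM s).posSemidef * D s) ^ 2 *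
              euclNorm (w - wh) ^ 2 +
            (1 + ε + 1 / ε) *
              specNorm (posSemidefSqrt (hM s).posSemidef * (B s * R s - P s * Bh s)) ^ 2 *
              euclNorm uh ^ 2) - V s x xh := by
        gcongr
        rw [hVdef, hVdef, closedLoop_error_eq _ _ _ _ _ _ _ _ _ _ _ (hiii s) (hiv s)]
        exact quadForm_closedLoop_le (hM s).posSemidef hε (hii s) _ _ _
      _ = _ := by ring

/-- Construction of simulation functions for linear switched systems: under the
matrix conditions (i)–(vi), the quadratic functions
`V_s(x, x̂) = (x - P_s x̂)ᵀ M_s (x - P_s x̂)` are local simulation functions from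
the abstract linear switched subsystem `(Â, B̂, Ĉ, D̂)` to the concrete one
`(A, B, C, D)` with the interface input
`u = K_s (x - P_s x̂) + Q_s x̂ + R_s û + T_s ŵ`: the output mismatch lower bound
(a) holds with `α = 1`, `p = 2`, and the one-step decrease (b) holds with decay
rate `1 - τκ`, internal gain `τ(1+ε+1/ε)‖M_s^{1/2} D_s‖²` and external gain
`τ(1+ε+1/ε)‖M_s^{1/2}(B_s R_s - P_s B̂_s)‖²`. -/
theorem linear_switched_simulation_function
    {S : Type*} [Nonempty S] {n m q nh mh r : ℕ}
    (A : S → Matrix (Fin n) (Fin n) ℝ) (B : S → Matrix (Fin n) (Fin m) ℝ)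
    (C : S → Matrix (Fin q) (Fin n) ℝ) (D : S → Matrix (Fin n) (Fin r) ℝ)
    (Ah : S → Matrix (Fin nh) (Fin nh) ℝ) (Bh : S → Matrix (Fin nh) (Fin mh) ℝ)
    (Ch : S → Matrix (Fin q) (Fin nh) ℝ) (Dh : S → Matrix (Fin nh) (Fin r) ℝ)
    (K : S → Matrix (Fin m) (Fin n) ℝ) (P : S → Matrix (Fin n) (Fin nh) ℝ)
    (Q : S → Matrix (Fin m) (Fin nh) ℝ) (T : S → Matrix (Fin m) (Fin r) ℝ)
    (R : S → Matrix (Fin m) (Fin mh) ℝ)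
    (M : S → Matrix (Fin n) (Fin n) ℝ) (hM : ∀ s, (M s).PosDef)
    (ε κ τ : ℝ) (hε : 0 < ε) (hκ0 : 0 < κ) (hκ1 : κ < 1) (hτ : 1 ≤ τ)
    (hτκ : τ * κ < 1)
    (V : S → (Fin n → ℝ) → (Fin nh → ℝ) → ℝ)
    (hVdef : ∀ s x xh,
      V s x xh = (x - (P s).mulVec xh) ⬝ᵥ (M s).mulVec (x - (P s).mulVec xh))
    (hi : ∀ s, (M s - (C s)ᵀ * C s).PosSemidef)
    (hii : ∀ s, (κ • M s -
      (1 + 1 / ε + ε) • ((A s + B s * K s)ᵀ * M s * (A s + B s * K s))).PosSemidef)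
    (hiii : ∀ s, A s * P s = P s * Ah s - B s * Q s)
    (hiv : ∀ s, D s = P s * Dh s - B s * T s)
    (hv : ∀ s, C s * P s = Ch s)
    (hvi : ∀ s s' x xh, V s x xh ≤ τ * V s' x xh) :
    ∀ (s' s : S) (x : Fin n → ℝ) (xh : Fin nh → ℝ) (uh : Fin mh → ℝ)
      (w wh : Fin r → ℝ),
      euclNorm ((C s).mulVec x - (Ch s).mulVec xh) ^ 2 ≤ V s x xh ∧
      V s'
          ((A s).mulVec x +
            (B s).mulVec ((K s).mulVec (x - (P s).mulVec xh) +
              (Q s).mulVec xh + (R s).mulVec uh + (T s).mulVec wh) +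
            (D s).mulVec w)
          ((Ah s).mulVec xh + (Bh s).mulVec uh + (Dh s).mulVec wh) -
        V s x xh ≤
      -(1 - τ * κ) * V s x xh +
        τ * (1 + ε + 1 / ε) * specNorm (posSemidefSqrt (hM s).posSemidef * D s) ^ 2 *
          euclNorm (w - wh) ^ 2 +
        τ * (1 + ε + 1 / ε) *
          specNorm (posSemidefSqrt (hM s).posSemidef * (B s * R s - P s * Bh s)) ^ 2 *
          euclNorm uh ^ 2 :=
  linear_switched_simulation_function_general A B C D Ah Bh Ch Dh K P Q T R M hM ε κ τ hε hτ V hVdef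
    hi hii hiii hiv hv hvi
end

section
/- Let A (n×n), B (n×m), D (n×r), K (m×n), P (n×n̂), Q (m×n̂), T (m×r), R (m×m̂), Â (n̂×n̂), B̂ (n̂×m̂), D̂ (n̂×r) be real matrices satisfying A P = P Â − B Q and D = P D̂ − B T. Then for all x ∈ ℝⁿ, x̂ ∈ ℝ^{n̂}, w, ŵ ∈ ℝ^{r}, û ∈ ℝ^{m̂}, setting u := K(x − P x̂) + Q x̂ + R û + T ŵ, the following identity holds: (A x + B u + D w) − P(Â x̂ + B̂ û + D̂ ŵ) = (A + B K)(x − P x̂) + D(w − ŵ) + (B R − P B̂) û. -/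
open Matrix

/-- Closed-loop error-dynamics identity: under the matrix compatibility
conditions `A P = P Â - B Q` and `D = P D̂ - B T`, and with the interface input
`u = K (x - P x̂) + Q x̂ + R û + T ŵ`, the mismatch between the next concrete
state and `P` times the next abstract state decomposes as
`(A + B K)(x - P x̂) + D (w - ŵ) + (B R - P B̂) û`. -/
theorem error_dynamics_identity {n m nh mh r : ℕ}
    (A : Matrix (Fin n) (Fin n) ℝ) (B : Matrix (Fin n) (Fin m) ℝ)
    (D : Matrix (Fin n) (Fin r) ℝ) (K : Matrix (Fin m) (Fin n) ℝ)
    (P : Matrix (Fin n) (Fin nh) ℝ) (Q : Matrix (Fin m) (Fin nh) ℝ)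
    (T : Matrix (Fin m) (Fin r) ℝ) (R : Matrix (Fin m) (Fin mh) ℝ)
    (Ah : Matrix (Fin nh) (Fin nh) ℝ) (Bh : Matrix (Fin nh) (Fin mh) ℝ)
    (Dh : Matrix (Fin nh) (Fin r) ℝ)
    (h1 : A * P = P * Ah - B * Q)
    (h2 : D = P * Dh - B * T) :
    ∀ (x : Fin n → ℝ) (xh : Fin nh → ℝ) (w wh : Fin r → ℝ) (uh : Fin mh → ℝ),
      (A.mulVec x +
          B.mulVec (K.mulVec (x - P.mulVec xh) + Q.mulVec xh + R.mulVec uh +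
            T.mulVec wh) +
          D.mulVec w) -
        P.mulVec (Ah.mulVec xh + Bh.mulVec uh + Dh.mulVec wh) =
      (A + B * K).mulVec (x - P.mulVec xh) + D.mulVec (w - wh) +
        (B * R - P * Bh).mulVec uh := by
  intro x xh w wh uh
  have e1 := congrArg (fun M => M.mulVec xh) h1
  have e2 := congrArg (fun M => M.mulVec wh) h2
  simp only [sub_mulVec, add_mulVec, ← mulVec_mulVec] at e1 e2
  simp only [mulVec_add, mulVec_sub, add_mulVec, sub_mulVec, ← mulVec_mulVec] at *
  rw [e1, e2]
  abel
end
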